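/- For every integer m ≥ 3 and every real s ≥ 1, one has [2](s)·[2](s)·[2](s)·[m](s) ≤ [3](s)·[2](s)·[2](s)·[m−1](s), i.e. [2,2,2,m](s) ≤ [2,2,3,m−1](s). -/

import Mathlib

/-!
Writing `[n] = ∑_{i<n} s^i`, splitting `[a + k]` at `a` and at `k` gives, for `a ≤ b`, the exact identity
`[a + 1] [b] = [a] [b + 1] + s^a [b - a]`. Hence `[a] [b + 1] ≤ [a + 1] [b]` whenever `s ≥ 0`, and the
theorem is the case `a = 2`, `b = m - 1` multiplied by `[2]²`.
-/

open Finset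

theorem geom_sum_succ_mul_geom_sum_eq {R : Type*} [CommSemiring R] (x : R) {a b : ℕ} (hab : a ≤ b) :
    (∑ i ∈ range (a + 1), x ^ i) * ∑ i ∈ range b, x ^ i =
      (∑ i ∈ range a, x ^ i) * (∑ i ∈ range (b + 1), x ^ i) + x ^ a * ∑ i ∈ range (b - a), x ^ i := by
  obtain ⟨k, rfl⟩ := Nat.exists_eq_add_of_le hab
  have hsplit (p q : ℕ) :
      ∑ i ∈ range (p + q), x ^ i = ∑ i ∈ range p, x ^ i + x ^ p * ∑ i ∈ range q, x ^ i := by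
    simp only [sum_range_add, pow_add, mul_sum]
  have hswap := (hsplit a k).symm.trans (add_comm a k ▸ hsplit k a)
  rw [Nat.add_sub_cancel_left, sum_range_succ, sum_range_succ, hsplit]
  set A := ∑ i ∈ range a, x ^ i
  set K := ∑ i ∈ range k, x ^ i
  calc (A + x ^ a) * (A + x ^ a * K) = A * (A + x ^ a * K) + x ^ a * (A + x ^ a * K) := by ring
    _ = A * (A + x ^ a * K + x ^ (a + k)) + x ^ a * K := by rw [hswap, pow_add]; ring

theorem geom_sum_mul_geom_sum_succ_le {R : Type*} [CommSemiring R] [PartialOrder R] [IsOrderedRing R]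
    {x : R} (hx : 0 ≤ x) {a b : ℕ} (hab : a ≤ b) :
    (∑ i ∈ range a, x ^ i) * (∑ i ∈ range (b + 1), x ^ i) ≤
      (∑ i ∈ range (a + 1), x ^ i) * ∑ i ∈ range b, x ^ i := by
  rw [geom_sum_succ_mul_geom_sum_eq x hab]
  exact le_add_of_nonneg_right <| mul_nonneg (pow_nonneg hx a) <| sum_nonneg fun i _ ↦ pow_nonneg hx i

/-- For every integer `m ≥ 3` and real `s ≥ 1`, `[2,2,2,m](s) ≤ [2,2,3,m−1](s)`,
where `[n](s) = 1 + s + ... + s^(n−1)` and `[n₁,…,n_r]` denotes the product. -/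
theorem stmt12 (m : ℕ) (hm : 3 ≤ m) (s : ℝ) (hs : 1 ≤ s) :
    (∑ i ∈ range 2, s ^ i) * (∑ i ∈ range 2, s ^ i) * (∑ i ∈ range 2, s ^ i) *
        (∑ i ∈ range m, s ^ i) ≤
      (∑ i ∈ range 3, s ^ i) * (∑ i ∈ range 2, s ^ i) * (∑ i ∈ range 2, s ^ i) *
        (∑ i ∈ range (m - 1), s ^ i) := by
  have key := geom_sum_mul_geom_sum_succ_le (zero_le_one.trans hs) (show 2 ≤ m - 1 by omega)
  rw [Nat.sub_add_cancel (by omega : 1 ≤ m)] at key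
  have := mul_le_mul_of_nonneg_left key (mul_self_nonneg (∑ i ∈ range 2, s ^ i))
  linarith
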